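/- Define B₂(r) = (r² + 9r³ − 3r⁵ + r⁶) − (r − 4r² + r³ + 2r⁴)·log(1−r) − (2 + 2r − 2r² − 2r³)·(log(1−r))². Then B₂ is monotonically increasing on [0,1), and B₂(r) ≥ 0 for all r ∈ [0,1). -/

import Mathlib

open Set

/-- `B₂(r)` from the proof of Theorem 2.1. -/
noncomputable def B₂ (r : ℝ) : ℝ :=
  (r ^ 2 + 9 * r ^ 3 - 3 * r ^ 5 + r ^ 6)
    - (r - 4 * r ^ 2 + r ^ 3 + 2 * r ^ 4) * Real.log (1 - r)
    - (2 + 2 * r - 2 * r ^ 2 - 2 * r ^ 3) * (Real.log (1 - r)) ^ 2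

lemma cert1 {x : ℝ} (h0 : 0 ≤ x) (h1 : x ≤ 1/3) :
    (0:ℝ) ≤ (3*x + 24*x^2 - 2*x^3 - 15*x^4 + 6*x^5) * (1 - x)^2 - (3 + 16*x + x^2 - 8*x^3) * ((x + x^2/2 + x^3/3 + x^4/4 + x^5/5 + x^6/6 + x^7/7 + x^8/8 + x^9/9 + x^10/10) * (1 - x) + x^11) * (1 - x) + (-2 + 4*x + 6*x^2) * ((x + x^2/2 + x^3/3 + x^4/4 + x^5/5 + x^6/6 + x^7/7 + x^8/8 + x^9/9 + x^10/10) * (1 - x) + x^11)^2 := by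
  have e : (3*x + 24*x^2 - 2*x^3 - 15*x^4 + 6*x^5) * (1 - x)^2 - (3 + 16*x + x^2 - 8*x^3) * ((x + x^2/2 + x^3/3 + x^4/4 + x^5/5 + x^6/6 + x^7/7 + x^8/8 + x^9/9 + x^10/10) * (1 - x) + x^11) * (1 - x) + (-2 + 4*x + 6*x^2) * ((x + x^2/2 + x^3/3 + x^4/4 + x^5/5 + x^6/6 + x^7/7 + x^8/8 + x^9/9 + x^10/10) * (1 - x) + x^11)^2 =
      (282429536481/2 : ℝ) * ((x) ^ 2 * (1/3 - x) ^ 22) + (2907978190434 : ℝ) * ((x) ^ 3 * (1/3 - x) ^ 21) + (114053880018177/4 : ℝ) * ((x) ^ 4 * (1/3 - x) ^ 20) + (1770808786245063/10 : ℝ) * ((x) ^ 5 * (1/3 - x) ^ 19) + (781592468768361 : ℝ) * ((x) ^ 6 * (1/3 - x) ^ 18) + (91269186984172269/35 : ℝ) * ((x) ^ 7 * (1/3 - x) ^ 17) + (478009011139655679/70 : ℝ) * ((x) ^ 8 * (1/3 - x) ^ 16) + (2013876152923957479/140 : ℝ) * ((x) ^ 9 * (1/3 - x) ^ 15) + (17348244753983402601/700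 : ℝ) * ((x) ^ 10 * (1/3 - x) ^ 14) + (882844773555609522/25 : ℝ) * ((x) ^ 11 * (1/3 - x) ^ 13) + (11736452092481741403/280 : ℝ) * ((x) ^ 12 * (1/3 - x) ^ 12) + (29126180909309450913/700 : ℝ) * ((x) ^ 13 * (1/3 - x) ^ 11) + (33892474703608958193/980 : ℝ) * ((x) ^ 14 * (1/3 - x) ^ 10) + (58881131425160232219/2450 : ℝ) * ((x) ^ 15 * (1/3 - x) ^ 9) + (545025368088518746599/39200 : ℝ) * ((x) ^ 16 * (1/3 - x) ^ 8) + (13027395995836151067/1960 : ℝ) * ((x) ^ 17 * (1/3 - x) ^ 7) + (50876264158789657671/19600 : ℝ) * ((x) ^ 18 * (1/3 - x) ^ 6) + (1596082117657996743/1960 : ℝ) * ((x) ^ 19 * (1/3 - x) ^ 5) + (7847743643028662539/39200 : ℝ) * ((x) ^ 20 * (1/3 - x) ^ 4) + (38996984642628791/1050 : ℝ) * ((x) ^ 21 * (1/3 - x) ^ 3) + (28742664887586701/5880 : ℝ) * ((x) ^ 22 * (1/3 - x) ^ 2) + (2990070787805261/7350 : ℝ) * ((x) ^ 23 * (1/3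 - x) ^ 1) + (112685896710/7 : ℝ) * ((x) ^ 24 * (1/3 - x) ^ 0) := by ring
  rw [e]
  have hA : (0:ℝ) ≤ x := by linarith
  have hB : (0:ℝ) ≤ 1/3 - x := by linarith
  repeat' apply add_nonneg
  all_goals exact mul_nonneg (by norm_num) (mul_nonneg (pow_nonneg hA _) (pow_nonneg hB _))


lemma cert2 {x : ℝ} (h0 : 1/3 ≤ x) (h1 : x ≤ 4/5) :
    (0:ℝ) ≤ (3*x + 24*x^2 - 2*x^3 - 15*x^4 + 6*x^5) * (1 - x) - (3 + 16*x + x^2 - 8*x^3) * ((x + x^2/2 + x^3/3 + x^4/4 + x^5/5 + x^6/6 + x^7/7 + x^8/8 + x^9/9 + x^10/10) * (1 - x) + x^11) + (-2 + 4*x + 6*x^2) * (x + x^2/2 + x^3/3 + x^4/4 + x^5/5 + x^6/6 + x^7/7 + x^8/8 + x^9/9 + x^10/10)^2 * (1 - x) := by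
  have e : (3*x + 24*x^2 - 2*x^3 - 15*x^4 + 6*x^5) * (1 - x) - (3 + 16*x + x^2 - 8*x^3) * ((x + x^2/2 + x^3/3 + x^4/4 + x^5/5 + x^6/6 + x^7/7 + x^8/8 + x^9/9 + x^10/10) * (1 - x) + x^11) + (-2 + 4*x + 6*x^2) * (x + x^2/2 + x^3/3 + x^4/4 + x^5/5 + x^6/6 + x^7/7 + x^8/8 + x^9/9 + x^10/10)^2 * (1 - x) =
      (671660284459590911865234375/191581231380566414401 : ℝ) * ((x - 1/3) ^ 0 * (4/5 - x) ^ 23) + (176676629015738391876220703125/2298974776566796972812 : ℝ) * ((x - 1/3) ^ 1 * (4/5 - x) ^ 22) + (7266599973470303668975830078125/9195899106267187891248 : ℝ) * ((x - 1/3) ^ 2 * (4/5 - x) ^ 21) + (1905487817226586231231689453125/375342820663966852704 : ℝ) * ((x - 1/3) ^ 3 * (4/5 - x) ^ 20) + (627724690424740509033203125000/27368747340080916343 : ℝ) * ((x - 1/3) ^ 4 * (4/5 - x) ^ 19) + (34150020358362691436004638671875/437899957441294661488 : ℝ) * ((x - 1/3) ^ 5 * (4/5 - x) ^ 18) + (91790605709924525809661865234375/437899957441294661488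 : ℝ) * ((x - 1/3) ^ 6 * (4/5 - x) ^ 17) + (2852269327006987681242938232421875/6130599404178125260832 : ℝ) * ((x - 1/3) ^ 7 * (4/5 - x) ^ 16) + (170513200477048622136888427734375/191581231380566414401 : ℝ) * ((x - 1/3) ^ 8 * (4/5 - x) ^ 15) + (1167435345104828331099840087890625/766324925522265657604 : ℝ) * ((x - 1/3) ^ 9 * (4/5 - x) ^ 14) + (9304357935555610002054931640625/3909821048582988049 : ℝ) * ((x - 1/3) ^ 10 * (4/5 - x) ^ 13) + (738852390585774715882638076171875/218949978720647330744 : ℝ) * ((x - 1/3) ^ 11 * (4/5 - x) ^ 12) + (232314143314659048143947669921875/54737494680161832686 : ℝ) * ((x - 1/3) ^ 12 * (4/5 - x) ^ 11) + (504415979788101858693300694921875/109474989360323665372 : ℝ) * ((x - 1/3) ^ 13 * (4/5 - x) ^ 10) + (3233333227717218749794309016015625/766324925522265657604 : ℝ) * ((x - 1/3) ^ 14 * (4/5 - x) ^ 9) + (1225831396666171611092741971171875/383162462761132828802 : ℝ) * ((x - 1/3) ^ 15 * (4/5 - x) ^ 8) + (378425882406775676476470750590625/191581231380566414401 : ℝ)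 * ((x - 1/3) ^ 16 * (4/5 - x) ^ 7) + (3811304602843926002174483060625/3909821048582988049 : ℝ) * ((x - 1/3) ^ 17 * (4/5 - x) ^ 6) + (10271314534806232027848741280500/27368747340080916343 : ℝ) * ((x - 1/3) ^ 18 * (4/5 - x) ^ 5) + (11910539508929920162557622906875/109474989360323665372 : ℝ) * ((x - 1/3) ^ 19 * (4/5 - x) ^ 4) + (614289193386397010779406305725/27368747340080916343 : ℝ) * ((x - 1/3) ^ 20 * (4/5 - x) ^ 3) + (1140721390477901941283555887941/383162462761132828802 : ℝ) * ((x - 1/3) ^ 21 * (4/5 - x) ^ 2) + (193893819992698931863977238956/957906156902832072005 : ℝ) * ((x - 1/3) ^ 22 * (4/5 - x) ^ 1) + (12989108436344527901689141416/4789530784514160360025 : ℝ) * ((x - 1/3) ^ 23 * (4/5 - x) ^ 0) := by ring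
  rw [e]
  have hA : (0:ℝ) ≤ x - 1/3 := by linarith
  have hB : (0:ℝ) ≤ 4/5 - x := by linarith
  repeat' apply add_nonneg
  all_goals exact mul_nonneg (by norm_num) (mul_nonneg (pow_nonneg hA _) (pow_nonneg hB _))


lemma cert3a {x : ℝ} (h0 : 4/5 ≤ x) (h1 : x ≤ 1) :
    (0:ℝ) ≤ 2 * (-2 + 4*x + 6*x^2) * (x + x^2/2 + x^3/3 + x^4/4 + x^5/5 + x^6/6 + x^7/7 + x^8/8 + x^9/9 + x^10/10) - (3 + 16*x + x^2 - 8*x^3) := by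
  have e : 2 * (-2 + 4*x + 6*x^2) * (x + x^2/2 + x^3/3 + x^4/4 + x^5/5 + x^6/6 + x^7/7 + x^8/8 + x^9/9 + x^10/10) - (3 + 16*x + x^2 - 8*x^3) =
      (4359200001/5 : ℝ) * ((x - 4/5) ^ 0 * (1 - x) ^ 12) + (922719688832/63 : ℝ) * ((x - 4/5) ^ 1 * (1 - x) ^ 11) + (6670734277645/63 : ℝ) * ((x - 4/5) ^ 2 * (1 - x) ^ 10) + (28091801566250/63 : ℝ) * ((x - 4/5) ^ 3 * (1 - x) ^ 9) + (25906521803125/21 : ℝ) * ((x - 4/5) ^ 4 * (1 - x) ^ 8) + (49982649916250/21 : ℝ) * ((x - 4/5) ^ 5 * (1 - x) ^ 7) + (9899563459375/3 : ℝ) * ((x - 4/5) ^ 6 * (1 - x) ^ 6) + (9971273500000/3 : ℝ) * ((x - 4/5) ^ 7 * (1 - x) ^ 5) + (101634583984375/42 : ℝ) * ((x - 4/5) ^ 8 * (1 - x) ^ 4) + (26128626953125/21 : ℝ) * ((x - 4/5) ^ 9 * (1 - x) ^ 3) + (54113462890625/126 : ℝ) * ((x - 4/5) ^ 10 * (1 -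 x) ^ 2) + (5635800781250/63 : ℝ) * ((x - 4/5) ^ 11 * (1 - x) ^ 1) + (536230468750/63 : ℝ) * ((x - 4/5) ^ 12 * (1 - x) ^ 0) := by ring
  rw [e]
  have hA : (0:ℝ) ≤ x - 4/5 := by linarith
  have hB : (0:ℝ) ≤ 1 - x := by linarith
  repeat' apply add_nonneg
  all_goals exact mul_nonneg (by norm_num) (mul_nonneg (pow_nonneg hA _) (pow_nonneg hB _))


lemma cert3b {x : ℝ} (h0 : 4/5 ≤ x) (h1 : x ≤ 1) :
    (0:ℝ) ≤ (3*x + 24*x^2 - 2*x^3 - 15*x^4 + 6*x^5) - (3 + 16*x + x^2 - 8*x^3) * (x + x^2/2 + x^3/3 + x^4/4 + x^5/5 + x^6/6 + x^7/7 + x^8/8 + x^9/9 + x^10/10) + (-2 + 4*x + 6*x^2) * (x + x^2/2 + x^3/3 + x^4/4 + x^5/5 + x^6/6 + x^7/7 + x^8/8 + x^9/9 + x^10/10)^2 := by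
  have e : (3*x + 24*x^2 - 2*x^3 - 15*x^4 + 6*x^5) - (3 + 16*x + x^2 - 8*x^3) * (x + x^2/2 + x^3/3 + x^4/4 + x^5/5 + x^6/6 + x^7/7 + x^8/8 + x^9/9 + x^10/10) + (-2 + 4*x + 6*x^2) * (x + x^2/2 + x^3/3 + x^4/4 + x^5/5 + x^6/6 + x^7/7 + x^8/8 + x^9/9 + x^10/10)^2 =
      (21150149839360063672/1575 : ℝ) * ((x - 4/5) ^ 0 * (1 - x) ^ 22) + (6481994619940935547204/19845 : ℝ) * ((x - 4/5) ^ 1 * (1 - x) ^ 21) + (10028930845238293807067/2646 : ℝ) * ((x - 4/5) ^ 2 * (1 - x) ^ 20) + (12310115009919912324500/441 : ℝ) * ((x - 4/5) ^ 3 * (1 - x) ^ 19) + (2324646451882221218800625/15876 : ℝ) * ((x - 4/5) ^ 4 * (1 - x) ^ 18) + (513276541910780356507625/882 : ℝ) * ((x - 4/5) ^ 5 * (1 - x) ^ 17) + (267513460076091240115000/147 : ℝ) * ((x - 4/5) ^ 6 * (1 - x) ^ 16) + (6072380155254086390490625/1323 : ℝ) * ((x - 4/5) ^ 7 * (1 -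 x) ^ 15) + (8374075744254943883984375/882 : ℝ) * ((x - 4/5) ^ 8 * (1 - x) ^ 14) + (28738067614257114819921875/1764 : ℝ) * ((x - 4/5) ^ 9 * (1 - x) ^ 13) + (370854993553168322739453125/15876 : ℝ) * ((x - 4/5) ^ 10 * (1 - x) ^ 12) + (37183145187769791701171875/1323 : ℝ) * ((x - 4/5) ^ 11 * (1 - x) ^ 11) + (11138095064361637822265625/392 : ℝ) * ((x - 4/5) ^ 12 * (1 - x) ^ 10) + (382701994618658277587890625/15876 : ℝ) * ((x - 4/5) ^ 13 * (1 - x) ^ 9) + (30150907701176463623046875/1764 : ℝ) * ((x - 4/5) ^ 14 * (1 - x) ^ 8) + (985467856333065185546875/98 : ℝ) * ((x - 4/5) ^ 15 * (1 - x) ^ 7) + (205488180431916876220703125/42336 : ℝ) * ((x - 4/5) ^ 16 * (1 - x) ^ 6) + (6669231796519195556640625/3528 : ℝ) * ((x - 4/5) ^ 17 * (1 - x) ^ 5) + (454393950237274169921875/784 : ℝ) * ((x - 4/5) ^ 18 * (1 - x) ^ 4) + (4277481043514251708984375/31752 : ℝ) * ((x - 4/5) ^ 19 * (1 - x) ^ 3)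 + (944828828586578369140625/42336 : ℝ) * ((x - 4/5) ^ 20 * (1 - x) ^ 2) + (4142352313995361328125/1764 : ℝ) * ((x - 4/5) ^ 21 * (1 - x) ^ 1) + (3746011829376220703125/31752 : ℝ) * ((x - 4/5) ^ 22 * (1 - x) ^ 0) := by ring
  rw [e]
  have hA : (0:ℝ) ≤ x - 4/5 := by linarith
  have hB : (0:ℝ) ≤ 1 - x := by linarith
  repeat' apply add_nonneg
  all_goals exact mul_nonneg (by norm_num) (mul_nonneg (pow_nonneg hA _) (pow_nonneg hB _))

lemma log_lb {x : ℝ} (h0 : 0 < x) (h1 : x < 1) :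
    (x + x^2/2 + x^3/3 + x^4/4 + x^5/5 + x^6/6 + x^7/7 + x^8/8 + x^9/9 + x^10/10) ≤ (-Real.log (1 - x)) := by
  have hx : |x| < 1 := by rw [abs_of_pos h0]; exact h1
  have hs := Real.hasSum_pow_div_log_of_abs_lt_one hx
  have := sum_le_hasSum (Finset.range 10)
    (fun i _ => by positivity) hs
  simp only [Finset.sum_range_succ, Finset.sum_range_zero] at this
  norm_num at this
  linarith

lemma log_ub {x : ℝ} (h0 : 0 < x) (h1 : x < 1) :
    (-Real.log (1 - x)) ≤ (x + x^2/2 + x^3/3 + x^4/4 + x^5/5 + x^6/6 + x^7/7 + x^8/8 + x^9/9 + x^10/10) + x^11 / (1 - x) := by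
  have hx : |x| < 1 := by rw [abs_of_pos h0]; exact h1
  have h := Real.abs_log_sub_add_sum_range_le hx 10
  rw [abs_of_pos h0] at h
  have h2 := (abs_le.1 h).1
  simp only [Finset.sum_range_succ, Finset.sum_range_zero] at h2
  norm_num at h2
  linarith

set_option maxHeartbeats 1000000 in
lemma B2_deriv {x : ℝ} (h1 : x < 1) :
    HasDerivAt B₂
      ((3*x + 24*x^2 - 2*x^3 - 15*x^4 + 6*x^5) + (3 + 16*x + x^2 - 8*x^3) * Real.log (1 - x) + (-2 + 4*x + 6*x^2) * (Real.log (1 - x))^2) x := by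
  have hne : 1 - x ≠ 0 := by linarith
  have h1x : HasDerivAt (fun y : ℝ => 1 - y) (-1) x := by
    simpa using (hasDerivAt_id x).const_sub 1
  have hlog : HasDerivAt (fun y : ℝ => Real.log (1 - y)) (-1 / (1 - x)) x := h1x.log hne
  have hP : HasDerivAt (fun y : ℝ => y ^ 2 + 9 * y ^ 3 - 3 * y ^ 5 + y ^ 6)
      ((2:ℕ) * x ^ 1 + 9 * ((3:ℕ) * x ^ 2) - 3 * ((5:ℕ) * x ^ 4) + (6:ℕ) * x ^ 5) x :=
    (((hasDerivAt_pow 2 x).add ((hasDerivAt_pow 3 x).const_mul 9)).sub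
      ((hasDerivAt_pow 5 x).const_mul 3)).add (hasDerivAt_pow 6 x)
  have hQ : HasDerivAt (fun y : ℝ => y - 4 * y ^ 2 + y ^ 3 + 2 * y ^ 4)
      (1 - 4 * ((2:ℕ) * x ^ 1) + (3:ℕ) * x ^ 2 + 2 * ((4:ℕ) * x ^ 3)) x :=
    (((hasDerivAt_id x).sub ((hasDerivAt_pow 2 x).const_mul 4)).add
      (hasDerivAt_pow 3 x)).add ((hasDerivAt_pow 4 x).const_mul 2)
  have hS : HasDerivAt (fun y : ℝ => 2 + 2 * y - 2 * y ^ 2 - 2 * y ^ 3)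
      (0 + 2 * 1 - 2 * ((2:ℕ) * x ^ 1) - 2 * ((3:ℕ) * x ^ 2)) x :=
    (((hasDerivAt_const x 2).add ((hasDerivAt_id x).const_mul 2)).sub
      ((hasDerivAt_pow 2 x).const_mul 2)).sub ((hasDerivAt_pow 3 x).const_mul 2)
  have total := (hP.sub (hQ.mul hlog)).sub (hS.mul (hlog.pow 2))
  have heq : HasDerivAt B₂
      (((2:ℕ) * x ^ 1 + 9 * ((3:ℕ) * x ^ 2) - 3 * ((5:ℕ) * x ^ 4) + (6:ℕ) * x ^ 5)
        - ((1 - 4 * ((2:ℕ) * x ^ 1) + (3:ℕ) * x ^ 2 + 2 * ((4:ℕ) * x ^ 3)) * Real.log (1 - x)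
            + (x - 4 * x ^ 2 + x ^ 3 + 2 * x ^ 4) * (-1 / (1 - x)))
        - ((0 + 2 * 1 - 2 * ((2:ℕ) * x ^ 1) - 2 * ((3:ℕ) * x ^ 2)) * Real.log (1 - x) ^ 2
            + (2 + 2 * x - 2 * x ^ 2 - 2 * x ^ 3)
              * ((2:ℕ) * Real.log (1 - x) ^ 1 * (-1 / (1 - x))))) x := total
  convert heq using 1
  push_cast
  field_simp
  ring

set_option maxHeartbeats 2000000 in
lemma B2_deriv_nonneg {x : ℝ} (h0 : 0 < x) (h1 : x < 1) :
    0 ≤ (3*x + 24*x^2 - 2*x^3 - 15*x^4 + 6*x^5) + (3 + 16*x + x^2 - 8*x^3) * Real.log (1 - x) + (-2 + 4*x + 6*x^2) * (Real.log (1 - x))^2 := by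
  have h1x : (0:ℝ) < 1 - x := by linarith
  have hlo := log_lb h0 h1
  have hub := log_ub h0 h1
  have hu0 : (0:ℝ) ≤ (-Real.log (1 - x)) := by
    have := Real.log_nonpos (x := 1 - x) (by linarith) (by linarith)
    linarith
  have hs0 : (0:ℝ) ≤ (x + x^2/2 + x^3/3 + x^4/4 + x^5/5 + x^6/6 + x^7/7 + x^8/8 + x^9/9 + x^10/10) := by positivity
  have hBpos : (0:ℝ) ≤ (3 + 16*x + x^2 - 8*x^3) := by
    nlinarith [mul_nonneg (mul_nonneg h0.le h1x.le) (by linarith : (0:ℝ) ≤ 1 + x), sq_nonneg x]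
  have hwt : (-Real.log (1 - x)) * (1 - x) ≤ ((x + x^2/2 + x^3/3 + x^4/4 + x^5/5 + x^6/6 + x^7/7 + x^8/8 + x^9/9 + x^10/10) * (1 - x) + x^11) := by
    have h2 : ((x + x^2/2 + x^3/3 + x^4/4 + x^5/5 + x^6/6 + x^7/7 + x^8/8 + x^9/9 + x^10/10) + x^11 / (1 - x)) * (1 - x) = ((x + x^2/2 + x^3/3 + x^4/4 + x^5/5 + x^6/6 + x^7/7 + x^8/8 + x^9/9 + x^10/10) * (1 - x) + x^11) := by
      field_simp
    have h3 := mul_le_mul_of_nonneg_right hub h1x.le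
    rw [h2] at h3
    exact h3
  have hut0 : (0:ℝ) ≤ (-Real.log (1 - x)) * (1 - x) := mul_nonneg hu0 h1x.le
  have hw0 : (0:ℝ) ≤ ((x + x^2/2 + x^3/3 + x^4/4 + x^5/5 + x^6/6 + x^7/7 + x^8/8 + x^9/9 + x^10/10) * (1 - x) + x^11) := le_trans hut0 hwt
  rcases le_or_gt x (1/3) with hc1 | hc1
  · -- C ≤ 0 region
    have hC : (-2 + 4*x + 6*x^2) ≤ 0 := by
      nlinarith [mul_nonneg (by linarith : (0:ℝ) ≤ 1 - 3*x) (by linarith : (0:ℝ) ≤ 1 + x)]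
    have hcert := cert1 h0.le hc1
    have H1 : (0:ℝ) ≤ (3 + 16*x + x^2 - 8*x^3) * (1 - x) * (((x + x^2/2 + x^3/3 + x^4/4 + x^5/5 + x^6/6 + x^7/7 + x^8/8 + x^9/9 + x^10/10) * (1 - x) + x^11) - (-Real.log (1 - x)) * (1 - x)) :=
      mul_nonneg (mul_nonneg hBpos h1x.le) (by linarith)
    have H2 : (0:ℝ) ≤ (-(-2 + 4*x + 6*x^2)) * ((((x + x^2/2 + x^3/3 + x^4/4 + x^5/5 + x^6/6 + x^7/7 + x^8/8 + x^9/9 + x^10/10) * (1 - x) + x^11) - (-Real.log (1 - x)) * (1 - x)) * (((x + x^2/2 + x^3/3 + x^4/4 + x^5/5 + x^6/6 + x^7/7 + x^8/8 + x^9/9 + x^10/10) * (1 - x) + x^11) + (-Real.log (1 - x)) * (1 - x))) :=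
      mul_nonneg (by linarith) (mul_nonneg (by linarith) (by linarith))
    have key : (0:ℝ) ≤ ((3*x + 24*x^2 - 2*x^3 - 15*x^4 + 6*x^5) + (3 + 16*x + x^2 - 8*x^3) * Real.log (1 - x) + (-2 + 4*x + 6*x^2) * (Real.log (1 - x))^2)
        * ((1 - x) * (1 - x)) := by linarith [hcert, H1, H2]
    nlinarith [key, mul_pos h1x h1x]
  rcases le_or_gt x (4/5) with hc2 | hc2
  · -- middle region
    have hC : (0:ℝ) ≤ (-2 + 4*x + 6*x^2) := by
      nlinarith [mul_nonneg (by linarith : (0:ℝ) ≤ 3*x - 1) (by linarith : (0:ℝ) ≤ 1 + x)]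
    have hcert := cert2 hc1.le hc2
    have H1 : (0:ℝ) ≤ (3 + 16*x + x^2 - 8*x^3) * (((x + x^2/2 + x^3/3 + x^4/4 + x^5/5 + x^6/6 + x^7/7 + x^8/8 + x^9/9 + x^10/10) * (1 - x) + x^11) - (-Real.log (1 - x)) * (1 - x)) :=
      mul_nonneg hBpos (by linarith)
    have H2 : (0:ℝ) ≤ (-2 + 4*x + 6*x^2) * (1 - x) * ((((-Real.log (1 - x))) - (x + x^2/2 + x^3/3 + x^4/4 + x^5/5 + x^6/6 + x^7/7 + x^8/8 + x^9/9 + x^10/10)) * (((-Real.log (1 - x))) + (x + x^2/2 + x^3/3 + x^4/4 + x^5/5 + x^6/6 + x^7/7 + x^8/8 + x^9/9 + x^10/10))) :=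
      mul_nonneg (mul_nonneg hC h1x.le) (mul_nonneg (by linarith) (by linarith))
    have key : (0:ℝ) ≤ ((3*x + 24*x^2 - 2*x^3 - 15*x^4 + 6*x^5) + (3 + 16*x + x^2 - 8*x^3) * Real.log (1 - x) + (-2 + 4*x + 6*x^2) * (Real.log (1 - x))^2)
        * (1 - x) := by linarith [hcert, H1, H2]
    nlinarith [key, h1x]
  · -- right region
    have hC : (0:ℝ) ≤ (-2 + 4*x + 6*x^2) := by nlinarith
    have hcerta := cert3a hc2.le h1.le
    have hcertb := cert3b hc2.le h1.le
    have hus : (0:ℝ) ≤ ((-Real.log (1 - x))) - (x + x^2/2 + x^3/3 + x^4/4 + x^5/5 + x^6/6 + x^7/7 + x^8/8 + x^9/9 + x^10/10) := by linarith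
    have H1 : (0:ℝ) ≤ (-2 + 4*x + 6*x^2) * (((-Real.log (1 - x))) - (x + x^2/2 + x^3/3 + x^4/4 + x^5/5 + x^6/6 + x^7/7 + x^8/8 + x^9/9 + x^10/10))^2 := mul_nonneg hC (sq_nonneg _)
    have H2 : (0:ℝ) ≤ (2 * (-2 + 4*x + 6*x^2) * (x + x^2/2 + x^3/3 + x^4/4 + x^5/5 + x^6/6 + x^7/7 + x^8/8 + x^9/9 + x^10/10) - (3 + 16*x + x^2 - 8*x^3)) * (((-Real.log (1 - x))) - (x + x^2/2 + x^3/3 + x^4/4 + x^5/5 + x^6/6 + x^7/7 + x^8/8 + x^9/9 + x^10/10)) := mul_nonneg hcerta hus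
    linarith [hcertb, H1, H2]

theorem stmt11 : MonotoneOn B₂ (Ico (0:ℝ) 1) ∧ ∀ r ∈ Ico (0:ℝ) 1, 0 ≤ B₂ r := by
  have hmono : MonotoneOn B₂ (Ico (0:ℝ) 1) := by
    have hint : interior (Ico (0:ℝ) 1) = Ioo 0 1 := interior_Ico
    apply monotoneOn_of_hasDerivWithinAt_nonneg (f' := fun x =>
      (3*x + 24*x^2 - 2*x^3 - 15*x^4 + 6*x^5) + (3 + 16*x + x^2 - 8*x^3) * Real.log (1 - x) + (-2 + 4*x + 6*x^2) * (Real.log (1 - x))^2) (convex_Ico 0 1)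
    · -- continuity
      have hne : ∀ r ∈ Ico (0:ℝ) 1, 1 - r ≠ 0 := by
        rintro r ⟨_, hr1⟩
        intro h
        linarith [sub_eq_zero.mp h]
      have hlogc : ContinuousOn (fun r : ℝ => Real.log (1 - r)) (Ico (0:ℝ) 1) :=
        ContinuousOn.log (by fun_prop) hne
      unfold B₂
      exact ((by fun_prop : ContinuousOn (fun r : ℝ => r ^ 2 + 9 * r ^ 3 - 3 * r ^ 5 + r ^ 6)
          (Ico (0:ℝ) 1)).sub
        ((by fun_prop : ContinuousOn (fun r : ℝ => r - 4 * r ^ 2 + r ^ 3 + 2 * r ^ 4)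
          (Ico (0:ℝ) 1)).mul hlogc)).sub
        ((by fun_prop : ContinuousOn (fun r : ℝ => 2 + 2 * r - 2 * r ^ 2 - 2 * r ^ 3)
          (Ico (0:ℝ) 1)).mul (hlogc.pow 2))
    · intro x hx
      rw [hint] at hx ⊢
      exact (B2_deriv hx.2).hasDerivWithinAt.mono Ioo_subset_Ico_self
    · intro x hx
      rw [hint] at hx
      exact B2_deriv_nonneg hx.1 hx.2
  refine ⟨hmono, fun r hr => ?_⟩
  have h0 : B₂ 0 = 0 := by simp [B₂]
  have := hmono (by constructor <;> norm_num : (0:ℝ) ∈ Ico (0:ℝ) 1) hr hr.1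
  linarith [this]
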